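/- arXiv:1910.05667 — 2 statements merged into one kernel-verified Lean document; each statement's English description precedes it below -/
import Mathlib

section
/- Let m, n ≥ 1, let c and c′ be proper 3-colorings of the m×n grid graph that differ at exactly one vertex v, and let h be a height function for c. Then exactly one of the two functions h + 2·1_v and h − 2·1_v (where 1_v is the indicator function of v) is a height function for c′. -/
/-- Adjacency in the `m × n` grid graph: two vertices are adjacent iff they differ by
`1` in exactly one coordinate. -/
def GridAdj {m n : ℕ} (u v : Fin m × Fin n) : Prop :=
  (u.1 = v.1 ∧ ((u.2 : ℕ) = (v.2 : ℕ) + 1 ∨ (v.2 : ℕ) = (u.2 : ℕ) + 1)) ∨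
  (u.2 = v.2 ∧ ((u.1 : ℕ) = (v.1 : ℕ) + 1 ∨ (v.1 : ℕ) = (u.1 : ℕ) + 1))

/-- A proper 3-coloring of the `m × n` grid graph. -/
def Proper3 {m n : ℕ} (c : Fin m × Fin n → ZMod 3) : Prop :=
  ∀ u v : Fin m × Fin n, GridAdj u v → c u ≠ c v

/-- A height function for a 3-coloring `c`: congruent to `c` mod 3 at every vertex,
and differing by exactly `1` across every edge of the grid graph. -/
def IsHeight {m n : ℕ} (c : Fin m × Fin n → ZMod 3) (h : Fin m × Fin n → ℤ) : Prop :=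
  (∀ v : Fin m × Fin n, ((h v : ℤ) : ZMod 3) = c v) ∧
  ∀ u v : Fin m × Fin n, GridAdj u v → |h u - h v| = 1

lemma gridAdj_ne {m n : ℕ} {u w : Fin m × Fin n} (hadj : GridAdj u w) : u ≠ w := by
  rintro rfl
  rcases hadj with ⟨_, h2⟩ | ⟨_, h2⟩ <;> omega

lemma gridAdj_symm {m n : ℕ} {u w : Fin m × Fin n} (hadj : GridAdj u w) : GridAdj w u := by
  rcases hadj with ⟨h1, h2⟩ | ⟨h1, h2⟩
  · exact Or.inl ⟨h1.symm, h2.symm⟩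
  · exact Or.inr ⟨h1.symm, h2.symm⟩

/-- If proper 3-colorings `c` and `c'` differ at exactly the vertex `v` and `h` is a
height function for `c`, then exactly one of `h + 2·1_v` and `h - 2·1_v` is a height
function for `c'`. -/
theorem height_function_recolor_step (m n : ℕ) (hm : 1 ≤ m) (hn : 1 ≤ n)
    (c c' : Fin m × Fin n → ZMod 3) (hc : Proper3 c) (hc' : Proper3 c')
    (v : Fin m × Fin n) (hv : c' v ≠ c v) (hagree : ∀ u, u ≠ v → c' u = c u)
    (h : Fin m × Fin n → ℤ) (hh : IsHeight c h) :
    Xor' (IsHeight c' (fun u => h u + if u = v then 2 else 0))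
         (IsHeight c' (fun u => h u - if u = v then 2 else 0)) := by
  obtain ⟨hmod, hedge⟩ := hh
  -- neighbors of v avoid both c v and c' v
  have hnb : ∀ u, GridAdj u v → c u ≠ c v ∧ c u ≠ c' v := by
    intro u hadj
    have hne : u ≠ v := gridAdj_ne hadj
    refine ⟨hc u v hadj, ?_⟩
    have := hc' u v hadj
    rwa [hagree u hne] at this
  have habs : ∀ u w, GridAdj u w → h u - h w = 1 ∨ h u - h w = -1 := by
    intro u w hadj
    have := hedge u w hadj
    rcases abs_eq (by norm_num : (0:ℤ) ≤ 1) |>.mp this with h1 | h1 <;> omega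
  have hcases : c' v = c v + 1 ∨ c' v = c v + 2 := by
    have : ∀ x y : ZMod 3, y ≠ x → y = x + 1 ∨ y = x + 2 := by decide
    exact this _ _ hv
  have third : ∀ x y : ZMod 3, y ≠ x → y ≠ x + 1 → y = x + 2 := by decide
  have third' : ∀ x y : ZMod 3, y ≠ x → y ≠ x + 2 → y = x + 1 := by decide
  -- value of h on a neighbor determines c there
  have hval : ∀ u, GridAdj u v → (h u = h v + 1 → c u = c v + 1) ∧ (h u = h v - 1 → c u = c v + 2) := by
    intro u hadj
    constructor <;> intro he
    · have e1 := hmod u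
      rw [he] at e1
      push_cast at e1
      rw [hmod v] at e1
      exact e1.symm ▸ rfl
    · have e1 := hmod u
      rw [he] at e1
      push_cast at e1
      rw [hmod v] at e1
      rw [← e1]
      have : ∀ x : ZMod 3, x - 1 = x + 2 := by decide
      exact this _
  rcases hcases with hcase | hcase
  · -- c' v = c v + 1 : the -2 shift works
    have hdown : ∀ u, GridAdj u v → h u = h v - 1 := by
      intro u hadj
      rcases habs u v hadj with h1 | h1
      · exfalso
        have hcu := (hnb u hadj).2
        have : c u = c v + 1 := (hval u hadj).1 (by omega)
        rw [hcase] at hcu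
        exact hcu this
      · omega
    refine Or.inr ⟨⟨?_, ?_⟩, ?_⟩
    · intro u
      by_cases hu : u = v
      · subst hu
        simp only [if_pos rfl]
        push_cast
        rw [hmod u, hcase]
        have : ∀ x : ZMod 3, x - 2 = x + 1 := by decide
        exact this _
      · simp only [if_neg hu, sub_zero]
        rw [hagree u hu]
        exact hmod u
    · intro u w hadj
      by_cases hu : u = v <;> by_cases hw : w = v
      · exact absurd (hu.trans hw.symm) (gridAdj_ne hadj)
      · simp only [if_pos hu, if_neg hw]
        have h1 := hdown w (gridAdj_symm (hu ▸ hadj))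
        have e : h u - 2 - (h w - 0) = -1 := by rw [hu]; omega
        rw [e]; norm_num
      · simp only [if_pos hw, if_neg hu]
        have h1 := hdown u (hw ▸ hadj)
        have e : h u - 0 - (h w - 2) = 1 := by rw [hw]; omega
        rw [e]; norm_num
      · simp only [if_neg hu, if_neg hw, sub_zero]
        exact hedge u w hadj
    · rintro ⟨H1, _⟩
      have := H1 v
      simp only [if_pos rfl] at this
      push_cast at this
      rw [hmod v, hcase] at this
      have hne : ∀ x : ZMod 3, x + 2 ≠ x + 1 := by decide
      exact hne _ this
  · -- c' v = c v + 2 : the +2 shift works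
    have hup : ∀ u, GridAdj u v → h u = h v + 1 := by
      intro u hadj
      rcases habs u v hadj with h1 | h1
      · omega
      · exfalso
        have hcu := (hnb u hadj).2
        have : c u = c v + 2 := (hval u hadj).2 (by omega)
        rw [hcase] at hcu
        exact hcu this
    refine Or.inl ⟨⟨?_, ?_⟩, ?_⟩
    · intro u
      by_cases hu : u = v
      · subst hu
        simp only [if_pos rfl]
        push_cast
        rw [hmod u, hcase]
      · simp only [if_neg hu, add_zero]
        rw [hagree u hu]
        exact hmod u
    · intro u w hadj
      by_cases hu : u = v <;> by_cases hw : w = v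
      · exact absurd (hu.trans hw.symm) (gridAdj_ne hadj)
      · simp only [if_pos hu, if_neg hw]
        have h1 := hup w (gridAdj_symm (hu ▸ hadj))
        have e : h u + 2 - (h w + 0) = 1 := by rw [hu]; omega
        rw [e]; norm_num
      · simp only [if_pos hw, if_neg hu]
        have h1 := hup u (hw ▸ hadj)
        have e : h u + 0 - (h w + 2) = -1 := by rw [hw]; omega
        rw [e]; norm_num
      · simp only [if_neg hu, if_neg hw, add_zero]
        exact hedge u w hadj
    · rintro ⟨H1, _⟩
      have := H1 v
      simp only [if_pos rfl] at this
      push_cast at this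
      rw [hmod v, hcase] at this
      have hne : ∀ x : ZMod 3, x - 2 ≠ x + 2 := by decide
      exact hne _ this
end

section
/- Let m, n ≥ 1. Any two proper 3-colorings of the m×n grid graph can be transformed into one another by a finite sequence of single-vertex recoloring steps, each intermediate coloring being a proper 3-coloring. -/
open Finset Function Relation

lemma Relation.ReflTransGen.exists_seq {α : Type*} {r : α → α → Prop} {a b : α}
    (h : ReflTransGen r a b) :
    ∃ (L : ℕ) (s : ℕ → α), s 0 = a ∧ s L = b ∧ ∀ k < L, r (s k) (s (k + 1)) := by
  induction h with
  | refl => exact ⟨0, fun _ => a, rfl, rfl, by simp⟩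
  | @tail b c _ hbc ih =>
    obtain ⟨L, s, h0, hL, hs⟩ := ih
    refine ⟨L + 1, fun k => if k ≤ L then s k else c, by simp [h0], by simp, fun k hk => ?_⟩
    rcases (Nat.lt_succ_iff.mp hk).lt_or_eq with hk | rfl
    · simp [hk.le, Nat.succ_le_of_lt hk, hs k hk]
    · simpa [hL] using hbc

namespace SimpleGraph

variable {V α : Type*} (G : SimpleGraph V)

def IsProperColoring (c : V → α) : Prop := ∀ u v, G.Adj u v → c u ≠ c v

def IsHeightFunction (c : V → ZMod 3) (h : V → ℤ) : Prop :=
  (∀ v, (h v : ZMod 3) = c v) ∧ ∀ u v, G.Adj u v → |h u - h v| = 1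

def RecolorStep (c c' : V → α) : Prop :=
  G.IsProperColoring c ∧ G.IsProperColoring c' ∧ ∃ v, c' v ≠ c v ∧ ∀ u, u ≠ v → c' u = c u

variable {G}

lemma RecolorStep.symm {c c' : V → α} (h : G.RecolorStep c c') : G.RecolorStep c' c := by
  obtain ⟨hc, hc', v, hv, hu⟩ := h
  exact ⟨hc', hc, v, hv.symm, fun u huv => (hu u huv).symm⟩

lemma IsHeightFunction.isProperColoring {c : V → ZMod 3} {h : V → ℤ}
    (hh : G.IsHeightFunction c h) : G.IsProperColoring c := by
  intro u v huv hcuv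
  have hcast : ((h u - h v : ℤ) : ZMod 3) = 0 := by push_cast; rw [hh.1, hh.1, hcuv, sub_self]
  rcases (abs_eq zero_le_one).mp (hh.2 u v huv) with hd | hd <;> rw [hd] at hcast <;>
    revert hcast <;> decide

lemma exists_lt_forall_adj_eq_sub_one [Fintype V] {f g : V → ℤ}
    (hf : ∀ u v, G.Adj u v → |f u - f v| = 1) (hg : ∀ u v, G.Adj u v → |g u - g v| = 1)
    (hlt : ∃ v, g v < f v) :
    ∃ v, g v < f v ∧ ∀ u, G.Adj u v → f u = f v - 1 := by
  obtain ⟨v₀, hv₀⟩ := hlt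
  obtain ⟨w, -, hw⟩ := exists_max_image univ (fun v => f v - g v) ⟨v₀, mem_univ v₀⟩
  set T := univ.filter fun v => f v - g v = f w - g w
  obtain ⟨v, hvT, hv⟩ := exists_max_image T f ⟨w, by simp [T]⟩
  have hvM : f v - g v = f w - g w := (mem_filter.mp hvT).2
  refine ⟨v, by linarith [hw v₀ (mem_univ v₀)], fun u huv => ?_⟩
  have hwu := hw u (mem_univ u)
  rcases (abs_eq zero_le_one).mp (hf u v huv) with hfu | hfu
  · rcases (abs_eq zero_le_one).mp (hg u v huv) with hgu | hgu
    · have huT : u ∈ T := mem_filter.mpr ⟨mem_univ u, by omega⟩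
      linarith [hv u huT]
    · omega
  · omega

lemma IsHeightFunction.update_sub_two [DecidableEq V] {c : V → ZMod 3} {h : V → ℤ}
    (hh : G.IsHeightFunction c h) {v : V} (hmax : ∀ u, G.Adj u v → h u = h v - 1) :
    G.IsHeightFunction (update c v (c v + 1)) (update h v (h v - 2)) := by
  constructor
  · intro u
    rcases eq_or_ne u v with rfl | hu
    · simp only [update_self]
      push_cast
      rw [hh.1 u, sub_eq_add_neg]
      rfl
    · simp only [update_of_ne hu, hh.1 u]
  · intro a b hab
    rcases eq_or_ne a v with rfl | ha
    · rcases eq_or_ne b a with rfl | hb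
      · exact absurd hab (G.loopless.irrefl b)
      · rw [update_self, update_of_ne hb, hmax b hab.symm]; norm_num
    rcases eq_or_ne b v with rfl | hb
    · rw [update_self, update_of_ne ha, hmax a hab]; norm_num
    · rw [update_of_ne ha, update_of_ne hb]; exact hh.2 a b hab

lemma exists_recolorStep_of_lt [Fintype V] [DecidableEq V] {c c' : V → ZMod 3} {h g : V → ℤ}
    (hh : G.IsHeightFunction c h) (hg : G.IsHeightFunction c' g)
    (hpar : ∀ v, (h v : ZMod 2) = g v) (hlt : ∃ v, g v < h v) :
    ∃ c₁ h₁, G.RecolorStep c c₁ ∧ G.IsHeightFunction c₁ h₁ ∧ (∀ v, (h₁ v : ZMod 2) = g v) ∧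
      ∑ v, (h₁ v - g v).natAbs < ∑ v, (h v - g v).natAbs := by
  obtain ⟨v, hv, hmax⟩ := exists_lt_forall_adj_eq_sub_one hh.2 hg.2 hlt
  have hv2 : g v + 2 ≤ h v := by
    have := (ZMod.intCast_eq_intCast_iff' _ _ 2).mp (hpar v)
    push_cast at this
    omega
  have hh₁ := hh.update_sub_two hmax
  refine ⟨_, _, ⟨hh.isProperColoring, hh₁.isProperColoring, v, ?_, fun u hu => update_of_ne hu _ _⟩,
    hh₁, fun u => ?_, ?_⟩
  · simp
  · rcases eq_or_ne u v with rfl | hu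
    · rw [update_self, ← hpar u, Int.cast_sub, sub_eq_self]
      decide
    · rw [update_of_ne hu, hpar u]
  · apply sum_lt_sum
    · intro u _
      rcases eq_or_ne u v with rfl | hu
      · simp only [update_self]; omega
      · rw [update_of_ne hu]
    · exact ⟨v, mem_univ v, by simp only [update_self]; omega⟩

theorem reflTransGen_recolorStep_of_isHeightFunction [Fintype V] [DecidableEq V]
    {c c' : V → ZMod 3} {h g : V → ℤ} (hh : G.IsHeightFunction c h)
    (hg : G.IsHeightFunction c' g) (hpar : ∀ v, (h v : ZMod 2) = g v) :
    ReflTransGen G.RecolorStep c c' := by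
  by_cases hlt : ∃ v, g v < h v
  · obtain ⟨c₁, h₁, hstep, hh₁, hpar₁, hdecr⟩ := exists_recolorStep_of_lt hh hg hpar hlt
    exact .head hstep (reflTransGen_recolorStep_of_isHeightFunction hh₁ hg hpar₁)
  by_cases hgt : ∃ v, h v < g v
  · obtain ⟨c₁, g₁, hstep, hg₁, hpar₁, hdecr⟩ :=
      exists_recolorStep_of_lt hg hh (fun v => (hpar v).symm) hgt
    exact .tail (reflTransGen_recolorStep_of_isHeightFunction hh hg₁ fun v => (hpar₁ v).symm)
      hstep.symm
  push Not at hlt hgt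
  have hhg : h = g := funext fun v => le_antisymm (hlt v) (hgt v)
  obtain rfl : c = c' := funext fun v => by rw [← hh.1 v, ← hg.1 v, hhg]
  exact .refl
termination_by ∑ v, (h v - g v).natAbs
decreasing_by
  · exact hdecr
  · have hcomm (a b : ℤ) : (a - b).natAbs = (b - a).natAbs := by rw [← Int.natAbs_neg, neg_sub]
    simpa only [hcomm (g₁ _), hcomm (g _)] using hdecr

end SimpleGraph

def gridGraph (m n : ℕ) : SimpleGraph (Fin m × Fin n) where
  Adj := GridAdj
  symm := ⟨fun _ _ h => by unfold GridAdj at *; tauto⟩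
  loopless := ⟨fun _ h => by unfold GridAdj at h; omega⟩

def stepLift (a b : ZMod 3) : ℤ := if b - a = 1 then 1 else -1

lemma stepLift_cast_zmod_three {a b : ZMod 3} (h : a ≠ b) : (stepLift a b : ZMod 3) = b - a := by
  revert a b; decide

lemma abs_stepLift (a b : ZMod 3) : |stepLift a b| = 1 := by
  unfold stepLift; split <;> simp

lemma stepLift_cast_zmod_two (a b : ZMod 3) : (stepLift a b : ZMod 2) = 1 := by
  unfold stepLift; split <;> decide

lemma stepLift_add_stepLift {a b d e : ZMod 3} (hab : a ≠ b) (hbd : b ≠ d) (hae : a ≠ e)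
    (hed : e ≠ d) : stepLift a b + stepLift b d = stepLift a e + stepLift e d := by
  revert a b d e; decide

section Grid

variable {m n : ℕ} {c : Fin m × Fin n → ZMod 3}

variable (c) in
def gridExtend (i j : ℕ) : ZMod 3 := if h : i < m ∧ j < n then c (⟨i, h.1⟩, ⟨j, h.2⟩) else 0

lemma gridExtend_val (v : Fin m × Fin n) : gridExtend c v.1 v.2 = c v := by
  simp [gridExtend]

lemma gridExtend_ne_succ_left (hc : Proper3 c) {i j : ℕ} (hi : i + 1 < m) (hj : j < n) :
    gridExtend c i j ≠ gridExtend c (i + 1) j := by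
  simp only [gridExtend, dif_pos (And.intro (Nat.lt_of_succ_lt hi) hj), dif_pos (And.intro hi hj)]
  exact hc _ _ (Or.inr ⟨rfl, Or.inr rfl⟩)

lemma gridExtend_ne_succ_right (hc : Proper3 c) {i j : ℕ} (hi : i < m) (hj : j + 1 < n) :
    gridExtend c i j ≠ gridExtend c i (j + 1) := by
  simp only [gridExtend, dif_pos (And.intro hi (Nat.lt_of_succ_lt hj)), dif_pos (And.intro hi hj)]
  exact hc _ _ (Or.inl ⟨rfl, Or.inr rfl⟩)

-- The constant `4 * val` is even and `≡ c (0, 0) (mod 3)`.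
variable (c) in
def pathHeight (i j : ℕ) : ℤ :=
  4 * (gridExtend c 0 0).val +
    (∑ k ∈ range i, stepLift (gridExtend c k 0) (gridExtend c (k + 1) 0)) +
    ∑ l ∈ range j, stepLift (gridExtend c i l) (gridExtend c i (l + 1))

lemma pathHeight_succ_right (i j : ℕ) :
    pathHeight c i (j + 1) - pathHeight c i j =
      stepLift (gridExtend c i j) (gridExtend c i (j + 1)) := by
  simp only [pathHeight, sum_range_succ]
  ring

lemma pathHeight_succ_left (hc : Proper3 c) {i j : ℕ} (hi : i + 1 < m) (hj : j < n) :
    pathHeight c (i + 1) j - pathHeight c i j =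
      stepLift (gridExtend c i j) (gridExtend c (i + 1) j) := by
  induction j with
  | zero => simp [pathHeight, sum_range_succ]
  | succ j ih =>
    have hsquare := stepLift_add_stepLift (gridExtend_ne_succ_left hc hi (by omega))
      (gridExtend_ne_succ_right hc hi hj) (gridExtend_ne_succ_right hc (by omega) hj)
      (gridExtend_ne_succ_left hc hi hj)
    linarith [ih (by omega), pathHeight_succ_right (c := c) i j,
      pathHeight_succ_right (c := c) (i + 1) j]

lemma pathHeight_cast_zmod_three (hc : Proper3 c) {i j : ℕ} (hi : i < m) (hj : j < n) :
    (pathHeight c i j : ZMod 3) = gridExtend c i j := by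
  have hcol : ∀ k ∈ range i, (stepLift (gridExtend c k 0) (gridExtend c (k + 1) 0) : ZMod 3) =
      gridExtend c (k + 1) 0 - gridExtend c k 0 := fun k hk =>
    stepLift_cast_zmod_three
      (gridExtend_ne_succ_left hc (by rw [mem_range] at hk; omega) (by omega))
  have hrow : ∀ l ∈ range j, (stepLift (gridExtend c i l) (gridExtend c i (l + 1)) : ZMod 3) =
      gridExtend c i (l + 1) - gridExtend c i l := fun l hl =>
    stepLift_cast_zmod_three (gridExtend_ne_succ_right hc hi (by rw [mem_range] at hl; omega))
  have hbase (a : ZMod 3) : ((4 * a.val : ℤ) : ZMod 3) = a := by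
    push_cast; rw [ZMod.natCast_zmod_val]; revert a; decide
  rw [pathHeight, Int.cast_add, Int.cast_add, hbase, Int.cast_sum, Int.cast_sum, sum_congr rfl hcol,
    sum_congr rfl hrow, sum_range_sub (fun k => gridExtend c k 0),
    sum_range_sub (fun l => gridExtend c i l)]
  ring

lemma pathHeight_cast_zmod_two (i j : ℕ) : (pathHeight c i j : ZMod 2) = i + j := by
  simp [pathHeight, stepLift_cast_zmod_two, show (4 : ZMod 2) = 0 from rfl]

lemma isHeight_pathHeight (hc : Proper3 c) : IsHeight c fun v => pathHeight c v.1 v.2 := by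
  refine ⟨fun v => by rw [pathHeight_cast_zmod_three hc v.1.isLt v.2.isLt, gridExtend_val], ?_⟩
  have hsucc {i j i' j' : ℕ} (h : i' = i ∧ j' = j + 1 ∨ i' = i + 1 ∧ j' = j) (hi : i' < m)
      (hj : j' < n) : |pathHeight c i' j' - pathHeight c i j| = 1 := by
    rcases h with ⟨rfl, rfl⟩ | ⟨rfl, rfl⟩
    · rw [pathHeight_succ_right, abs_stepLift]
    · rw [pathHeight_succ_left hc hi hj, abs_stepLift]
  rintro u v (⟨h1, h2 | h2⟩ | ⟨h1, h2 | h2⟩)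
  · exact hsucc (.inl ⟨congrArg Fin.val h1, h2⟩) u.1.isLt u.2.isLt
  · rw [abs_sub_comm]; exact hsucc (.inl ⟨congrArg Fin.val h1.symm, h2⟩) v.1.isLt v.2.isLt
  · exact hsucc (.inr ⟨h2, congrArg Fin.val h1⟩) u.1.isLt u.2.isLt
  · rw [abs_sub_comm]; exact hsucc (.inr ⟨h2, congrArg Fin.val h1.symm⟩) v.1.isLt v.2.isLt

end Grid

theorem grid_three_colorings_connected_general (m n : ℕ)
    (c c' : Fin m × Fin n → ZMod 3) (hc : Proper3 c) (hc' : Proper3 c') :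
    ∃ (L : ℕ) (seq : ℕ → Fin m × Fin n → ZMod 3),
      seq 0 = c ∧ seq L = c' ∧
      (∀ k ≤ L, Proper3 (seq k)) ∧
      (∀ k < L, ∃ v, seq (k + 1) v ≠ seq k v ∧ ∀ u, u ≠ v → seq (k + 1) u = seq k u) := by
  have hconn : ReflTransGen (gridGraph m n).RecolorStep c c' :=
    SimpleGraph.reflTransGen_recolorStep_of_isHeightFunction (isHeight_pathHeight hc)
      (isHeight_pathHeight hc')
      fun v => by rw [pathHeight_cast_zmod_two, pathHeight_cast_zmod_two]
  obtain ⟨L, seq, h0, hL, hsteps⟩ := hconn.exists_seq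
  refine ⟨L, seq, h0, hL, fun k hk => ?_, fun k hk => (hsteps k hk).2.2⟩
  rcases hk.lt_or_eq with hk | rfl
  · exact (hsteps k hk).1
  · exact hL ▸ hc'

/-- Any two proper 3-colorings of the `m × n` grid graph are connected by a finite
sequence of single-vertex recoloring steps through proper 3-colorings. -/
theorem grid_three_colorings_connected (m n : ℕ) (hm : 1 ≤ m) (hn : 1 ≤ n)
    (c c' : Fin m × Fin n → ZMod 3) (hc : Proper3 c) (hc' : Proper3 c') :
    ∃ (L : ℕ) (seq : ℕ → Fin m × Fin n → ZMod 3),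
      seq 0 = c ∧ seq L = c' ∧
      (∀ k ≤ L, Proper3 (seq k)) ∧
      (∀ k < L, ∃ v, seq (k + 1) v ≠ seq k v ∧ ∀ u, u ≠ v → seq (k + 1) u = seq k u) :=
  grid_three_colorings_connected_general m n c c' hc hc'
end
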